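/- arXiv:2403.17096 — 5 statements merged into one kernel-verified Lean document; each statement's English description precedes it below -/
import Mathlib

section
/- Let G be a finite group, α ∈ G, and g ∈ G with g² = α. The number of elements of G conjugate to g that are also square roots of α equals the index [Z_G(α) : Z_G(g)] of the centralizer of g in the centralizer of α. -/
/-- The number of conjugates of `g` that are square roots of `α = g²` equals the index of the
centralizer of `g` in the centralizer of `α`. -/
theorem card_conj_sqrts {G : Type*} [Group G] [Finite G] (α g : G) (hg : g ^ 2 = α) :
    Nat.card {h : G // IsConj g h ∧ h ^ 2 = α} =
      (Subgroup.centralizer ({g} : Set G)).relIndex (Subgroup.centralizer ({α} : Set G)) := by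
  classical
  set K : Subgroup G := Subgroup.centralizer ({α} : Set G) with hK
  set K' : Subgroup (ConjAct G) := K.map ConjAct.toConjAct.toMonoidHom with hK'
  -- The set in question is the orbit of `g` under conjugation by `K'`.
  have horbit : MulAction.orbit K' g = {h : G | IsConj g h ∧ h ^ 2 = α} := by
    ext x
    constructor
    · rintro ⟨⟨k, hk⟩, rfl⟩
      obtain ⟨c, hcK, rfl⟩ := hk
      have hc : c * α = α * c := (Subgroup.mem_centralizer_iff.mp hcK α rfl).symm
      refine ⟨?_, ?_⟩
      · rw [isConj_iff]
        exact ⟨c, rfl⟩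
      · show (ConjAct.toConjAct c • g) ^ 2 = α
        rw [ConjAct.toConjAct_smul,
          show (c * g * c⁻¹) ^ 2 = c * g ^ 2 * c⁻¹ by simp [pow_two, mul_assoc], hg, hc]
        group
    · rintro ⟨hconj, hsq⟩
      obtain ⟨c, rfl⟩ := isConj_iff.mp hconj
      have hcα : c * α * c⁻¹ = α := by
        rw [← hg, ← show (c * g * c⁻¹) ^ 2 = c * g ^ 2 * c⁻¹ by simp [pow_two, mul_assoc], hsq, hg]
      have hcK : c ∈ K := by
        refine Subgroup.mem_centralizer_iff.mpr ?_
        rintro y rfl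
        rw [eq_comm, ← mul_inv_eq_iff_eq_mul] at hcα
        rw [← hcα]; group
      exact ⟨⟨ConjAct.toConjAct c, c, hcK, rfl⟩, by
        show ConjAct.toConjAct c • g = c * g * c⁻¹
        rw [ConjAct.toConjAct_smul]⟩
  -- The stabilizer of `g` in `K'` corresponds to the centralizer of `g`.
  have hstab : MulAction.stabilizer K' g =
      (MulAction.stabilizer (ConjAct G) g).subgroupOf K' := by
    ext ⟨k, hk⟩
    simp [MulAction.mem_stabilizer_iff, Subgroup.mem_subgroupOf, Subgroup.smul_def]
  calc Nat.card {h : G // IsConj g h ∧ h ^ 2 = α}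
      = Nat.card (MulAction.orbit K' g) := by rw [horbit]; rfl
    _ = (MulAction.orbit K' g).ncard := Nat.card_coe_set_eq _
    _ = (MulAction.stabilizer K' g).index := (MulAction.index_stabilizer K' g).symm
    _ = (MulAction.stabilizer (ConjAct G) g).relIndex K' := by
        rw [hstab, Subgroup.relIndex]
    _ = (Subgroup.centralizer ({g} : Set G)).relIndex K := by
        rw [Subgroup.centralizer_eq_comap_stabilizer g]; exact (Subgroup.relIndex_comap _ _ _).symm
end

section
/- Let f be a monic irreducible polynomial over F_q (q odd) with f(0) ≠ 0 such that F(x) = f(x²) is irreducible of degree 2·deg f. Then F has a root β in an algebraic closure whose square β² is a root of f, and the multiplicative order of β is even while the multiplicative order of β² equals half the order of β. -/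
set_option maxHeartbeats 1000000


open Polynomial IntermediateField

/-- If `f` is monic irreducible over `F_q` (`q` odd) with `f(0) ≠ 0` and `F = f(x²)` is
irreducible of degree `2·deg f`, then `F` has a root `β` in an algebraic closure with `β²` a
root of `f`, the multiplicative order of `β` is even, and the order of `β²` is half that of
`β`. -/
theorem root_of_irreducible_square_comp {F : Type*} [Field F] [Fintype F]
    (hq : Odd (Fintype.card F)) (f : F[X]) (hmonic : f.Monic) (hirr : Irreducible f)
    (h0 : f.coeff 0 ≠ 0) (hF : Irreducible (f.comp (X ^ 2)))
    (hdeg : (f.comp (X ^ 2)).natDegree = 2 * f.natDegree) :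
    ∃ β : AlgebraicClosure F, aeval β (f.comp (X ^ 2)) = 0 ∧ aeval (β ^ 2) f = 0 ∧
      Even (orderOf β) ∧ orderOf (β ^ 2) = orderOf β / 2 := by

  have hd : 0 < f.natDegree := natDegree_pos_iff_degree_pos.2 (degree_pos_of_irreducible hirr)
  have hFdeg : (f.comp (X ^ 2)).degree ≠ 0 := by
    rw [degree_eq_natDegree hF.ne_zero, hdeg]
    exact_mod_cast by omega
  obtain ⟨β, hβ⟩ := IsAlgClosed.exists_aeval_eq_zero (AlgebraicClosure F) (f.comp (X ^ 2)) hFdeg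
  have hβ2 : aeval (β ^ 2) f = 0 := by
    rwa [aeval_comp, map_pow, aeval_X] at hβ
  have hβne : β ≠ 0 := by
    rintro rfl
    rw [zero_pow (two_ne_zero), ← coeff_zero_eq_aeval_zero'] at hβ2
    exact h0 (by simpa using hβ2)
  -- β is integral
  have hint : IsIntegral F β := Algebra.IsIntegral.isIntegral β
  have hint2 : IsIntegral F (β ^ 2) := Algebra.IsIntegral.isIntegral _
  -- finite order
  have hfin : IsOfFinOrder β := by
    have : FiniteDimensional F F⟮β⟯ := IntermediateField.adjoin.finiteDimensional hint
    have : Finite F⟮β⟯ := Module.finite_of_finite F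
    have : Fintype F⟮β⟯ := Fintype.ofFinite _
    set g : F⟮β⟯ := IntermediateField.AdjoinSimple.gen F β
    have hgne : g ≠ 0 := by
      intro h
      apply hβne
      have := congrArg (algebraMap F⟮β⟯ (AlgebraicClosure F)) h
      simpa [g, IntermediateField.AdjoinSimple.algebraMap_gen] using this
    have hpow : g ^ (Fintype.card F⟮β⟯ - 1) = 1 :=
      FiniteField.pow_card_sub_one_eq_one g hgne
    rw [isOfFinOrder_iff_pow_eq_one]
    refine ⟨Fintype.card F⟮β⟯ - 1, ?_, ?_⟩
    · have := Fintype.one_lt_card (α := F⟮β⟯)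
      omega
    · have := congrArg (algebraMap F⟮β⟯ (AlgebraicClosure F)) hpow
      simpa [g, IntermediateField.AdjoinSimple.algebraMap_gen] using this
  have hminβ : minpoly F β = f.comp (X ^ 2) :=
    (minpoly.eq_of_irreducible_of_monic hF hβ (hmonic.comp (monic_X_pow 2) (by simp))).symm
  have hminβ2 : minpoly F (β ^ 2) = f :=
    (minpoly.eq_of_irreducible_of_monic hirr hβ2 hmonic).symm
  have hnpos : 0 < orderOf β := hfin.orderOf_pos
  have heven : Even (orderOf β) := by
    by_contra hodd
    rw [Nat.not_even_iff_odd] at hodd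
    set n := orderOf β with hn
    have hk : 2 * ((n + 1) / 2) = n + 1 := by
      obtain ⟨m, hm⟩ := hodd; omega
    have hβeq : (β ^ 2) ^ ((n + 1) / 2) = β := by
      rw [← pow_mul, hk, pow_succ, pow_orderOf_eq_one, one_mul]
    have hmem : (β ^ 2) ^ ((n + 1) / 2) ∈ F⟮β ^ 2⟯ :=
      pow_mem (IntermediateField.mem_adjoin_simple_self F (β ^ 2)) ((n + 1) / 2)
    rw [hβeq] at hmem
    have hle1 : F⟮β⟯ ≤ F⟮β ^ 2⟯ := IntermediateField.adjoin_simple_le_iff.2 hmem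
    have hle2 : F⟮β ^ 2⟯ ≤ F⟮β⟯ :=
      IntermediateField.adjoin_simple_le_iff.2
        (pow_mem (IntermediateField.mem_adjoin_simple_self F β) 2)
    have hle : F⟮β⟯ = F⟮β ^ 2⟯ := le_antisymm hle1 hle2
    have h1 : Module.finrank F F⟮β⟯ = 2 * f.natDegree := by
      rw [IntermediateField.adjoin.finrank hint, hminβ, hdeg]
    have h2 : Module.finrank F F⟮β ^ 2⟯ = f.natDegree := by
      rw [IntermediateField.adjoin.finrank hint2, hminβ2]
    rw [hle, h2] at h1
    omega
  refine ⟨β, hβ, hβ2, heven, ?_⟩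
  rw [hfin.orderOf_pow, Nat.gcd_eq_right (even_iff_two_dvd.mp heven)]
end

section
/- Let f be a monic irreducible polynomial of degree d over F_q with f(0) ≠ 0, and let t be the (common) multiplicative order of the roots of f. If t is odd and q is odd, then f(x²) is not irreducible; it factors as a product of two monic irreducible polynomials of degree d. -/
open Polynomial IntermediateField

/-- If the (common) multiplicative order of the roots of a monic irreducible `f` over `F_q`
(`q` odd, `f(0) ≠ 0`) is odd, then `f(x²)` is reducible: it is a product of two monic
irreducible polynomials of degree `deg f`. -/
theorem square_comp_reducible_of_odd_order {F : Type*} [Field F] [Fintype F]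
    (hq : Odd (Fintype.card F)) (f : F[X]) (hmonic : f.Monic) (hirr : Irreducible f)
    (h0 : f.coeff 0 ≠ 0)
    (hodd : ∀ β : AlgebraicClosure F, aeval β f = 0 → Odd (orderOf β)) :
    ¬ Irreducible (f.comp (X ^ 2)) ∧
      ∃ g₁ g₂ : F[X], g₁.Monic ∧ g₂.Monic ∧ Irreducible g₁ ∧ Irreducible g₂ ∧
        g₁.natDegree = f.natDegree ∧ g₂.natDegree = f.natDegree ∧
        f.comp (X ^ 2) = g₁ * g₂ := by
  classical
  set K := AlgebraicClosure F
  have hd : 0 < f.natDegree := hirr.natDegree_pos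
  -- pick a root α of f in the algebraic closure
  obtain ⟨α, hα⟩ : ∃ α : K, aeval α f = 0 := by
    apply IsAlgClosed.exists_aeval_eq_zero
    rw [f.degree_eq_natDegree hmonic.ne_zero]
    exact_mod_cast hd.ne'
  set t := orderOf α with ht_def
  have ht : Odd t := hodd α hα
  -- square root of α of odd order
  set γ : K := α ^ ((t + 1) / 2) with hγdef
  have h2dvd : 2 ∣ t + 1 := by
    obtain ⟨m, hm⟩ := ht
    exact ⟨m + 1, by omega⟩
  have hγ2 : γ ^ 2 = α := by
    rw [hγdef, ← pow_mul, Nat.div_mul_cancel h2dvd, pow_succ, pow_orderOf_eq_one, one_mul]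
  have hγint : IsIntegral F γ := Algebra.IsIntegral.isIntegral γ
  have hγint' : IsIntegral F (-γ) := Algebra.IsIntegral.isIntegral (-γ)
  have hαint : IsIntegral F α := Algebra.IsIntegral.isIntegral α
  set g₁ := minpoly F γ with hg₁def
  set g₂ := minpoly F (-γ) with hg₂def
  have hg₁m : g₁.Monic := minpoly.monic hγint
  have hg₂m : g₂.Monic := minpoly.monic hγint'
  have hg₁i : Irreducible g₁ := minpoly.irreducible hγint
  have hg₂i : Irreducible g₂ := minpoly.irreducible hγint'
  -- both dividing f ∘ X²
  have hroot₁ : aeval γ (f.comp (X ^ 2)) = 0 := by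
    rw [aeval_comp, map_pow, aeval_X, hγ2, hα]
  have hroot₂ : aeval (-γ) (f.comp (X ^ 2)) = 0 := by
    rw [aeval_comp, map_pow, aeval_X, neg_sq, hγ2, hα]
  have hdvd₁ : g₁ ∣ f.comp (X ^ 2) := minpoly.dvd F γ hroot₁
  have hdvd₂ : g₂ ∣ f.comp (X ^ 2) := minpoly.dvd F (-γ) hroot₂
  -- f is the minimal polynomial of α
  have hfmin : f = minpoly F α := minpoly.eq_of_irreducible_of_monic hirr hα hmonic
  -- degrees
  have hFγ : F⟮γ⟯ = F⟮α⟯ := by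
    apply le_antisymm
    · rw [IntermediateField.adjoin_simple_le_iff]
      exact pow_mem (IntermediateField.mem_adjoin_simple_self F α) _
    · rw [IntermediateField.adjoin_simple_le_iff, ← hγ2]
      exact pow_mem (IntermediateField.mem_adjoin_simple_self F γ) _
  have hFγ' : F⟮-γ⟯ = F⟮γ⟯ := by
    apply le_antisymm
    · rw [IntermediateField.adjoin_simple_le_iff]
      exact neg_mem (IntermediateField.mem_adjoin_simple_self F γ)
    · rw [IntermediateField.adjoin_simple_le_iff]
      have := neg_mem (IntermediateField.mem_adjoin_simple_self F (-γ))
      rwa [neg_neg] at this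
  have hdeg₁ : g₁.natDegree = f.natDegree := by
    rw [hg₁def, ← IntermediateField.adjoin.finrank hγint, hFγ,
      IntermediateField.adjoin.finrank hαint, ← hfmin]
  have hdeg₂ : g₂.natDegree = f.natDegree := by
    rw [hg₂def, ← IntermediateField.adjoin.finrank hγint', hFγ', hFγ,
      IntermediateField.adjoin.finrank hαint, ← hfmin]
  -- order of γ is odd
  have hsdvd : orderOf γ ∣ t := by
    apply orderOf_dvd_of_pow_eq_one
    rw [hγdef, ← pow_mul, mul_comm, pow_mul, pow_orderOf_eq_one, one_pow]
  have hsodd : Odd (orderOf γ) := by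
    rw [Nat.odd_iff] at ht ⊢
    by_contra h
    have hmod : orderOf γ % 2 = 0 := by omega
    have h2t : 2 ∣ t := (Nat.dvd_of_mod_eq_zero hmod).trans hsdvd
    omega
  -- -1 ≠ 1 in K
  have hne : (-1 : K) ≠ 1 := by
    intro h
    have h2 : (2 : K) = 0 := by linear_combination -h
    have h2F : (2 : F) = 0 := by
      apply (algebraMap F K).injective
      rw [map_ofNat, map_zero]
      exact h2
    have hchar : ringChar F ∣ 2 := ringChar.dvd h2F
    have hprime : (ringChar F).Prime := CharP.char_is_prime F (ringChar F)
    have : ringChar F = 2 := (Nat.prime_dvd_prime_iff_eq hprime Nat.prime_two).mp hchar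
    have := FiniteField.even_card_iff_char_two.mp this
    rw [Nat.odd_iff] at hq
    omega
  -- g₁ ≠ g₂
  have hneq : g₁ ≠ g₂ := by
    intro h
    have hroot : aeval (-γ) g₁ = 0 := by rw [h]; exact minpoly.aeval F (-γ)
    haveI : Fact (Irreducible g₁) := ⟨hg₁i⟩
    set φ₁ := AdjoinRoot.liftAlgHom g₁ (Algebra.ofId F K) γ (by rw [Algebra.toRingHom_ofId, ← aeval_def]; exact minpoly.aeval F γ)
    set φ₂ := AdjoinRoot.liftAlgHom g₁ (Algebra.ofId F K) (-γ) (by rw [Algebra.toRingHom_ofId, ← aeval_def]; exact hroot)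
    have hinj₁ : Function.Injective φ₁ := φ₁.toRingHom.injective
    have hinj₂ : Function.Injective φ₂ := φ₂.toRingHom.injective
    have ho₁ : orderOf γ = orderOf (AdjoinRoot.root g₁) := by
      rw [← AdjoinRoot.liftAlgHom_root (i := Algebra.ofId F K) (x := γ)]
      exact orderOf_injective φ₁.toRingHom.toMonoidHom hinj₁ _
    have ho₂ : orderOf (-γ) = orderOf (AdjoinRoot.root g₁) := by
      rw [← AdjoinRoot.liftAlgHom_root (i := Algebra.ofId F K) (x := -γ)]
      exact orderOf_injective φ₂.toRingHom.toMonoidHom hinj₂ _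
    have hoeq : orderOf (-γ) = orderOf γ := by rw [ho₂, ho₁]
    have h1 : (-γ) ^ orderOf γ = 1 := by rw [← hoeq]; exact pow_orderOf_eq_one _
    rw [hsodd.neg_pow, pow_orderOf_eq_one] at h1
    exact hne h1
  -- coprime, hence product divides
  have hnd : ¬ g₁ ∣ g₂ := by
    intro h
    exact hneq (Polynomial.eq_of_monic_of_associated hg₁m hg₂m (hg₁i.associated_of_dvd hg₂i h))
  have hcop : IsCoprime g₁ g₂ := (hg₁i.coprime_iff_not_dvd).mpr hnd
  have hmuldvd : g₁ * g₂ ∣ f.comp (X ^ 2) := hcop.mul_dvd hdvd₁ hdvd₂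
  have hcompdeg : (f.comp (X ^ 2)).natDegree = f.natDegree * 2 := by
    rw [natDegree_comp, natDegree_X_pow]
  have hcompmonic : (f.comp (X ^ 2)).Monic := by
    apply hmonic.comp (monic_X_pow 2)
    rw [natDegree_X_pow]; omega
  have heq : g₁ * g₂ = f.comp (X ^ 2) := by
    apply Polynomial.eq_of_dvd_of_natDegree_le_of_leadingCoeff hmuldvd
    · rw [hcompdeg, natDegree_mul hg₁m.ne_zero hg₂m.ne_zero, hdeg₁, hdeg₂]
      omega
    · rw [(hg₁m.mul hg₂m).leadingCoeff, hcompmonic.leadingCoeff]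
  refine ⟨?_, g₁, g₂, hg₁m, hg₂m, hg₁i, hg₂i, hdeg₁, hdeg₂, heq.symm⟩
  intro h
  rcases h.isUnit_or_isUnit heq.symm with h' | h'
  · exact hg₁i.not_isUnit h'
  · exact hg₂i.not_isUnit h'
end

section
/- Let q be odd and let C be a companion matrix of a monic irreducible polynomial f over F_q of degree d such that F(x) = f(x²) is irreducible. Then the block diagonal matrix diag(C, C) ∈ GL_{2d}(F_q) has a square root in GL_{2d}(F_q); namely, the companion matrix of F squares to a matrix conjugate to diag(C, C). -/
open Polynomial Matrix

/-- The companion matrix of a polynomial `f`, of size `f.natDegree`. -/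
def companionMatrix {F : Type*} [Field F] (f : F[X]) :
    Matrix (Fin f.natDegree) (Fin f.natDegree) F := fun i j =>
  if (i : ℕ) = (j : ℕ) + 1 then 1
  else if (j : ℕ) = f.natDegree - 1 then -f.coeff i else 0

section Aux

variable {F : Type*} [Field F]

lemma coeff_comp_X_sq (f : F[X]) (k : ℕ) :
    (f.comp (X ^ 2)).coeff k = if k % 2 = 0 then f.coeff (k / 2) else 0 := by
  rw [Polynomial.comp, eval₂_eq_sum, sum_def, finset_sum_coeff]
  simp only [coeff_C_mul, ← pow_mul, coeff_X_pow]
  by_cases hk : k % 2 = 0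
  · simp only [hk, if_true]
    by_cases hmem : k / 2 ∈ f.support
    · rw [Finset.sum_eq_single (k / 2)]
      · have : k = 2 * (k / 2) := by omega
        simp [← this]
      · intro b _ hb
        have : ¬ (k = 2 * b) := by omega
        simp [this]
      · intro h; exact absurd hmem h
    · rw [Finset.sum_eq_zero, (notMem_support_iff.1 hmem)]
      intro b hb
      have hbk : b ≠ k / 2 := fun h => hmem (h ▸ hb)
      have : ¬ (k = 2 * b) := by omega
      simp [this]
  · simp only [hk, if_false]
    rw [Finset.sum_eq_zero]
    intro b _
    have : ¬ (k = 2 * b) := by omega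
    simp [this]

lemma mul_companion_last (g : F[X]) (A : Matrix (Fin g.natDegree) (Fin g.natDegree) F)
    (i j : Fin g.natDegree) (hj : (j : ℕ) = g.natDegree - 1) :
    (A * companionMatrix g) i j = -∑ k, A i k * g.coeff (k : ℕ) := by
  rw [Matrix.mul_apply, ← Finset.sum_neg_distrib]
  apply Finset.sum_congr rfl
  intro k _
  have hk := k.isLt
  have hj' := j.isLt
  have h1 : ¬ ((k : ℕ) = (j : ℕ) + 1) := by omega
  simp only [companionMatrix]
  rw [if_neg h1, if_pos hj]
  ring

lemma mul_companion_mid (g : F[X]) (A : Matrix (Fin g.natDegree) (Fin g.natDegree) F)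
    (i j : Fin g.natDegree) (hj : (j : ℕ) + 1 < g.natDegree) :
    (A * companionMatrix g) i j = A i ⟨(j : ℕ) + 1, hj⟩ := by
  rw [Matrix.mul_apply]
  rw [Finset.sum_eq_single (⟨(j : ℕ) + 1, hj⟩ : Fin g.natDegree)]
  · simp [companionMatrix]
  · intro k _ hk
    have hk' : ¬ ((k : ℕ) = (j : ℕ) + 1) := fun h => hk (Fin.ext h)
    have h2 : ¬ ((j : ℕ) = g.natDegree - 1) := by omega
    simp [companionMatrix, hk', h2]
  · intro h; exact absurd (Finset.mem_univ _) h

lemma isUnit_companion (g : F[X]) (hm : g.Monic) (h0 : g.coeff 0 ≠ 0)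
    (hn : 0 < g.natDegree) : IsUnit (companionMatrix g) := by
  set N := g.natDegree with hN
  set B : Matrix (Fin N) (Fin N) F := fun i j =>
    if (j : ℕ) = 0 then -g.coeff ((i : ℕ) + 1) / g.coeff 0
    else if (i : ℕ) + 1 = (j : ℕ) then 1 else 0 with hB
  have key : B * companionMatrix g = 1 := by
    ext i j
    by_cases hj : (j : ℕ) + 1 < N
    · rw [mul_companion_mid g B i j hj]
      have hj0 : ¬ ((⟨(j : ℕ) + 1, hj⟩ : Fin N) : ℕ) = 0 := by simp
      by_cases hij : (i : ℕ) = (j : ℕ)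
      · have : i = j := Fin.ext hij
        subst this
        simp [hB, Matrix.one_apply]
      · have h1 : ¬ ((i : ℕ) + 1 = (j : ℕ) + 1) := by omega
        have h2 : i ≠ j := fun h => hij (by rw [h])
        simp [hB, h1, Matrix.one_apply, h2, hij]
    · have hj' : (j : ℕ) = N - 1 := by have := j.isLt; omega
      rw [mul_companion_last g B i j hj']
      have hsum : ∑ k, B i k * g.coeff (k : ℕ) =
          (-g.coeff ((i : ℕ) + 1) / g.coeff 0 * g.coeff 0) +
          (if (i : ℕ) + 1 < N then g.coeff ((i : ℕ) + 1) else 0) := by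
        have point : ∀ k : Fin N, B i k * g.coeff (k : ℕ) =
            (if k = (⟨0, hn⟩ : Fin N) then -g.coeff ((i : ℕ) + 1) / g.coeff 0 * g.coeff 0 else 0)
            + (if (k : ℕ) = (i : ℕ) + 1 then g.coeff ((i : ℕ) + 1) else 0) := by
          intro k
          by_cases hk0 : (k : ℕ) = 0
          · have hkk : k = (⟨0, hn⟩ : Fin N) := Fin.ext hk0
            subst hkk
            have : ¬ ((0 : ℕ) = (i : ℕ) + 1) := by omega
            simp [hB, this]
          · have hne : k ≠ (⟨0, hn⟩ : Fin N) := fun h => hk0 (by rw [h])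
            by_cases h1 : (i : ℕ) + 1 = (k : ℕ)
            · rw [hB]
              simp only []
              rw [if_neg hk0, if_pos h1, one_mul, if_neg hne, if_pos h1.symm, zero_add]
              exact congrArg _ h1.symm
            · have h1' : ¬ ((k : ℕ) = (i : ℕ) + 1) := fun h => h1 h.symm
              simp [hB, hk0, h1, h1', hne]
        rw [Finset.sum_congr rfl (fun k _ => point k), Finset.sum_add_distrib]
        congr 1
        · rw [Finset.sum_ite_eq']
          simp
        · by_cases hi : (i : ℕ) + 1 < N
          · rw [if_pos hi, Finset.sum_eq_single (⟨(i : ℕ) + 1, hi⟩ : Fin N)]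
            · simp
            · intro k _ hk
              have : ¬ ((k : ℕ) = (i : ℕ) + 1) := fun h => hk (Fin.ext h)
              simp [this]
            · intro h; exact absurd (Finset.mem_univ _) h
          · rw [if_neg hi, Finset.sum_eq_zero]
            intro k _
            have : ¬ ((k : ℕ) = (i : ℕ) + 1) := by have := k.isLt; omega
            simp [this]
      rw [hsum, div_mul_cancel₀ _ h0]
      by_cases hi : (i : ℕ) + 1 < N
      · have : i ≠ j := by intro h; rw [h] at hi; omega
        simp [Matrix.one_apply, this, hi]
      · have hi' : (i : ℕ) = N - 1 := by have := i.isLt; omega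
        have hij : j = i := Fin.ext (by omega)
        have hlead : g.coeff ((i : ℕ) + 1) = 1 := by
          have : (i : ℕ) + 1 = N := by omega
          rw [this, hN]
          exact hm.coeff_natDegree
        rw [hij, if_neg hi, add_zero, neg_neg, hlead, Matrix.one_apply_eq]
  exact (Matrix.isUnit_iff_isUnit_det _).2 (Matrix.isUnit_det_of_left_inverse key)

end Aux

/-- The interleaving permutation of `Fin N`, `N = 2n`. -/
def shuffle (n N : ℕ) (hN : N = 2 * n) : Fin N ≃ Fin N where
  toFun i := ⟨if (i : ℕ) % 2 = 0 then (i : ℕ) / 2 else n + (i : ℕ) / 2, by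
    have := i.isLt; split_ifs <;> omega⟩
  invFun k := ⟨if (k : ℕ) < n then 2 * (k : ℕ) else 2 * ((k : ℕ) - n) + 1, by
    have := k.isLt; split_ifs <;> omega⟩
  left_inv i := by
    have := i.isLt
    apply Fin.ext
    simp only []
    split_ifs <;> omega
  right_inv k := by
    have := k.isLt
    apply Fin.ext
    simp only []
    split_ifs <;> omega

lemma shuffle_coe {n N : ℕ} (hN : N = 2 * n) (i : Fin N) :
    ((shuffle n N hN i : Fin N) : ℕ) = if (i : ℕ) % 2 = 0 then (i : ℕ) / 2 else n + (i : ℕ) / 2 :=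
  rfl

theorem main_aux {F : Type*} [Field F] (f : F[X]) (hmonic : f.Monic) (h0 : f.coeff 0 ≠ 0)
    (hn : 0 < f.natDegree)
    (h : f.natDegree + f.natDegree = (f.comp (X ^ 2)).natDegree)
    (D : Matrix (Fin ((f.comp (X ^ 2)).natDegree)) (Fin ((f.comp (X ^ 2)).natDegree)) F)
    (hD : D = (Matrix.fromBlocks (companionMatrix f) 0 0 (companionMatrix f)).reindex
        (finSumFinEquiv.trans (finCongr h)) (finSumFinEquiv.trans (finCongr h))) :
    (∃ S : Matrix (Fin ((f.comp (X ^ 2)).natDegree)) (Fin ((f.comp (X ^ 2)).natDegree)) F,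
        IsUnit S ∧ S * S = D) ∧
      ∃ P : Matrix (Fin ((f.comp (X ^ 2)).natDegree)) (Fin ((f.comp (X ^ 2)).natDegree)) F,
        IsUnit P ∧
          companionMatrix (f.comp (X ^ 2)) * companionMatrix (f.comp (X ^ 2)) =
            P * D * P⁻¹ := by
  classical
  have hN : (f.comp (X ^ 2)).natDegree = 2 * f.natDegree := by omega
  -- coefficient facts about (f.comp (X ^ 2))
  have hGe : ∀ m : ℕ, m % 2 = 0 → (f.comp (X ^ 2)).coeff m = f.coeff (m / 2) := by
    intro m hm
    show (f.comp (X ^ 2)).coeff m = f.coeff (m / 2)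
    rw [coeff_comp_X_sq, if_pos hm]
  have hGo : ∀ m : ℕ, m % 2 = 1 → (f.comp (X ^ 2)).coeff m = 0 := by
    intro m hm
    show (f.comp (X ^ 2)).coeff m = 0
    rw [coeff_comp_X_sq, if_neg (by omega)]
  have hGmonic : (f.comp (X ^ 2)).Monic := hmonic.comp (monic_X_pow 2) (by simp)
  have hG0 : (f.comp (X ^ 2)).coeff 0 ≠ 0 := by
    have := hGe 0 (by omega)
    rw [this]
    simpa using h0
  -- the reindexing equivalences
  set E := finSumFinEquiv.trans (finCongr h) with hEdef
  have hEl : ∀ r : Fin f.natDegree, ((E (Sum.inl r)) : ℕ) = (r : ℕ) := by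
    intro r; simp [hEdef]; try omega
  have hEr : ∀ r : Fin f.natDegree, ((E (Sum.inr r)) : ℕ) = f.natDegree + (r : ℕ) := by
    intro r; simp [hEdef]; try omega
  set σ := shuffle f.natDegree (f.comp (X ^ 2)).natDegree hN with hσdef
  set Mb := Matrix.fromBlocks (companionMatrix f) (0 : Matrix (Fin f.natDegree) (Fin f.natDegree) F) 0
      (companionMatrix f) with hMbdef
  have hDapp : ∀ a b : Fin (f.comp (X ^ 2)).natDegree, D a b = Mb (E.symm a) (E.symm b) := by
    intro a b
    rw [hD, Matrix.reindex_apply, Matrix.submatrix_apply]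
  have hσE1 : ∀ (i : Fin (f.comp (X ^ 2)).natDegree), (i : ℕ) % 2 = 0 →
      E.symm (σ i) = Sum.inl ⟨(i : ℕ) / 2, by have := i.isLt; omega⟩ := by
    intro i hp
    rw [Equiv.symm_apply_eq]
    apply Fin.ext
    rw [hEl, shuffle_coe hN i, if_pos hp]
  have hσE2 : ∀ (i : Fin (f.comp (X ^ 2)).natDegree), (i : ℕ) % 2 = 1 →
      E.symm (σ i) = Sum.inr ⟨(i : ℕ) / 2, by have := i.isLt; omega⟩ := by
    intro i hp
    rw [Equiv.symm_apply_eq]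
    apply Fin.ext
    rw [hEr, shuffle_coe hN i, if_neg (by omega)]
  -- the key entrywise computation
  have key : ∀ i j : Fin (f.comp (X ^ 2)).natDegree,
      ((companionMatrix (f.comp (X ^ 2)) * companionMatrix (f.comp (X ^ 2)) :
        Matrix (Fin (f.comp (X ^ 2)).natDegree) (Fin (f.comp (X ^ 2)).natDegree) F)) i j
      = Mb (E.symm (σ i)) (E.symm (σ j)) := by
    intro i j
    have hiLt := i.isLt
    have hjLt := j.isLt
    by_cases hjl : (j : ℕ) = (f.comp (X ^ 2)).natDegree - 1
    · -- last column
      have hGN1 : (f.comp (X ^ 2)).coeff ((f.comp (X ^ 2)).natDegree - 1) = 0 := hGo _ (by omega)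
      rw [mul_companion_last (f.comp (X ^ 2)) (companionMatrix (f.comp (X ^ 2))) i j hjl]
      have point : ∀ k : Fin (f.comp (X ^ 2)).natDegree, companionMatrix (f.comp (X ^ 2)) i k * (f.comp (X ^ 2)).coeff (k : ℕ)
          = if (k : ℕ) + 1 = (i : ℕ) then (f.comp (X ^ 2)).coeff (k : ℕ) else 0 := by
        intro k
        by_cases h1 : (i : ℕ) = (k : ℕ) + 1
        · simp [companionMatrix, h1]
        · by_cases h2 : (k : ℕ) = (f.comp (X ^ 2)).natDegree - 1
          · have hz : (f.comp (X ^ 2)).coeff (k : ℕ) = 0 := by rw [h2]; exact hGN1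
            simp [companionMatrix, h1, hz]
          · have h3 : ¬ ((k : ℕ) + 1 = (i : ℕ)) := by omega
            simp [companionMatrix, h1, h2, h3]
      rw [Finset.sum_congr rfl fun k _ => point k]
      by_cases hi0 : (i : ℕ) = 0
      · rw [Finset.sum_eq_zero (fun k _ => by rw [if_neg (by omega)]), neg_zero]
        rw [hσE1 i (by omega), hσE2 j (by omega)]
        rw [hMbdef, Matrix.fromBlocks_apply₁₂, Matrix.zero_apply]
      · have hsum : (∑ k : Fin (f.comp (X ^ 2)).natDegree, if (k : ℕ) + 1 = (i : ℕ) then (f.comp (X ^ 2)).coeff (k : ℕ) else 0)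
            = (f.comp (X ^ 2)).coeff ((i : ℕ) - 1) := by
          rw [Finset.sum_eq_single (⟨(i : ℕ) - 1, by omega⟩ : Fin (f.comp (X ^ 2)).natDegree)]
          · rw [if_pos (show ((i : ℕ) - 1) + 1 = (i : ℕ) by omega)]
          · intro k _ hk
            apply if_neg
            intro hc
            apply hk
            apply Fin.ext
            show (k : ℕ) = (i : ℕ) - 1
            omega
          · intro hmem; exact absurd (Finset.mem_univ _) hmem
        rw [hsum]
        by_cases hpi : (i : ℕ) % 2 = 0
        · have : (f.comp (X ^ 2)).coeff ((i : ℕ) - 1) = 0 := hGo _ (by omega)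
          rw [this, neg_zero, hσE1 i hpi, hσE2 j (by omega)]
          rw [hMbdef, Matrix.fromBlocks_apply₁₂, Matrix.zero_apply]
        · rw [hσE2 i (by omega), hσE2 j (by omega)]
          rw [hGe _ (by omega)]
          have hhalf : ((i : ℕ) - 1) / 2 = (i : ℕ) / 2 := by omega
          rw [hhalf, hMbdef, Matrix.fromBlocks_apply₂₂]
          simp only [companionMatrix]
          rw [if_neg (by omega), if_pos (by omega)]
    · -- middle columns
      have hmid : (j : ℕ) + 1 < (f.comp (X ^ 2)).natDegree := by omega
      rw [mul_companion_mid (f.comp (X ^ 2)) (companionMatrix (f.comp (X ^ 2))) i j hmid]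
      by_cases hjp : (j : ℕ) = (f.comp (X ^ 2)).natDegree - 2
      · have hL : companionMatrix (f.comp (X ^ 2)) i ⟨(j : ℕ) + 1, hmid⟩ = -(f.comp (X ^ 2)).coeff (i : ℕ) := by
          simp only [companionMatrix]
          rw [if_neg (by omega), if_pos (by omega)]
        rw [hL]
        by_cases hpi : (i : ℕ) % 2 = 0
        · rw [hσE1 i hpi, hσE1 j (by omega)]
          rw [hGe _ hpi, hMbdef, Matrix.fromBlocks_apply₁₁]
          simp only [companionMatrix]
          rw [if_neg (by omega), if_pos (by omega)]
        · rw [hσE2 i (by omega), hσE1 j (by omega)]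
          rw [hGo _ (by omega), neg_zero, hMbdef, Matrix.fromBlocks_apply₂₁, Matrix.zero_apply]
      · -- j ≤ (f.comp (X ^ 2)).natDegree - 3
        have hL : companionMatrix (f.comp (X ^ 2)) i ⟨(j : ℕ) + 1, hmid⟩
            = if (i : ℕ) = (j : ℕ) + 2 then 1 else 0 := by
          simp only [companionMatrix]
          by_cases hI : (i : ℕ) = (j : ℕ) + 2
          · rw [if_pos (by omega), if_pos hI]
          · rw [if_neg (by omega), if_neg (by omega), if_neg hI]
        rw [hL]
        by_cases hpi : (i : ℕ) % 2 = 0 <;> by_cases hpj : (j : ℕ) % 2 = 0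
        · rw [hσE1 i hpi, hσE1 j hpj, hMbdef, Matrix.fromBlocks_apply₁₁]
          simp only [companionMatrix]
          by_cases hI : (i : ℕ) = (j : ℕ) + 2
          · rw [if_pos hI, if_pos (by omega)]
          · rw [if_neg hI, if_neg (by omega), if_neg (by omega)]
        · rw [hσE1 i hpi, hσE2 j (by omega), hMbdef, Matrix.fromBlocks_apply₁₂,
            Matrix.zero_apply, if_neg (by omega)]
        · rw [hσE2 i (by omega), hσE1 j hpj, hMbdef, Matrix.fromBlocks_apply₂₁,
            Matrix.zero_apply, if_neg (by omega)]
        · rw [hσE2 i (by omega), hσE2 j (by omega), hMbdef, Matrix.fromBlocks_apply₂₂]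
          simp only [companionMatrix]
          by_cases hI : (i : ℕ) = (j : ℕ) + 2
          · rw [if_pos hI, if_pos (by omega)]
          · rw [if_neg hI, if_neg (by omega), if_neg (by omega)]
  -- assemble
  have hCC : companionMatrix (f.comp (X ^ 2)) * companionMatrix (f.comp (X ^ 2)) = D.submatrix ⇑σ ⇑σ := by
    ext i j
    rw [Matrix.submatrix_apply, hDapp]
    exact key i j
  set P := (1 : Matrix (Fin (f.comp (X ^ 2)).natDegree) (Fin (f.comp (X ^ 2)).natDegree) F).submatrix ⇑σ ⇑(Equiv.refl (Fin (f.comp (X ^ 2)).natDegree)) with hPdef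
  set Q := (1 : Matrix (Fin (f.comp (X ^ 2)).natDegree) (Fin (f.comp (X ^ 2)).natDegree) F).submatrix ⇑(Equiv.refl (Fin (f.comp (X ^ 2)).natDegree)) ⇑σ with hQdef
  have hPQ : P * Q = 1 := by
    rw [hPdef, hQdef, Matrix.submatrix_mul_equiv, Matrix.one_mul, Matrix.submatrix_one_equiv]
  have hQP : Q * P = 1 := by
    rw [hPdef, hQdef, Matrix.submatrix_mul_equiv, Matrix.one_mul, Equiv.coe_refl,
      Matrix.submatrix_id_id]
  have hPD : P * D * Q = D.submatrix ⇑σ ⇑σ := by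
    rw [hPdef, hQdef, Matrix.one_submatrix_mul, Matrix.mul_submatrix_one]
    simp [Matrix.submatrix_submatrix]
  have hPunit : IsUnit P := (Matrix.isUnit_iff_isUnit_det _).2 (Matrix.isUnit_det_of_right_inverse hPQ)
  have hQunit : IsUnit Q := (Matrix.isUnit_iff_isUnit_det _).2 (Matrix.isUnit_det_of_right_inverse hQP)
  have hPinv : P⁻¹ = Q := Matrix.inv_eq_right_inv hPQ
  have hCunit : IsUnit (companionMatrix (f.comp (X ^ 2))) := isUnit_companion (f.comp (X ^ 2)) hGmonic hG0 (by omega)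
  have hCCPDQ : companionMatrix (f.comp (X ^ 2)) * companionMatrix (f.comp (X ^ 2)) = P * D * Q := by rw [hPD]; exact hCC
  refine ⟨⟨Q * companionMatrix (f.comp (X ^ 2)) * P, (hQunit.mul hCunit).mul hPunit, ?_⟩,
    P, hPunit, by rw [hPinv, hPD]; exact hCC⟩
  have h1 : (Q * companionMatrix (f.comp (X ^ 2)) * P) * (Q * companionMatrix (f.comp (X ^ 2)) * P)
      = Q * (companionMatrix (f.comp (X ^ 2)) * ((P * Q) * (companionMatrix (f.comp (X ^ 2)) * P))) := by
    simp only [Matrix.mul_assoc]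
  rw [h1, hPQ, Matrix.one_mul, ← Matrix.mul_assoc (companionMatrix (f.comp (X ^ 2))) (companionMatrix (f.comp (X ^ 2))) P,
    hCCPDQ]
  have h2 : Q * (P * D * Q * P) = (Q * P) * (D * (Q * P)) := by
    simp only [Matrix.mul_assoc]
  rw [h2, hQP, Matrix.one_mul, Matrix.mul_one]

/-- If `f` is monic irreducible over `F_q` (`q` odd) with `f(0) ≠ 0` and `F(x) = f(x²)` is
irreducible, then `diag(C_f, C_f)` has a square root in `GL_{2d}(F_q)`; indeed the companion
matrix of `F` squares to a matrix conjugate to `diag(C_f, C_f)`. -/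
theorem diag_companion_has_sqrt {F : Type*} [Field F] [Fintype F]
    (hq : Odd (Fintype.card F)) (f : F[X]) (hmonic : f.Monic) (hirr : Irreducible f)
    (h0 : f.coeff 0 ≠ 0) (hF : Irreducible (f.comp (X ^ 2))) :
    letI D : Matrix (Fin ((f.comp (X ^ 2)).natDegree)) (Fin ((f.comp (X ^ 2)).natDegree)) F :=
      (Matrix.fromBlocks (companionMatrix f) 0 0 (companionMatrix f)).reindex
        (finSumFinEquiv.trans (finCongr (by simp [natDegree_comp]; ring))) (finSumFinEquiv.trans (finCongr (by simp [natDegree_comp]; ring)))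
    (∃ S : Matrix (Fin ((f.comp (X ^ 2)).natDegree)) (Fin ((f.comp (X ^ 2)).natDegree)) F,
        IsUnit S ∧ S * S = D) ∧
      ∃ P : Matrix (Fin ((f.comp (X ^ 2)).natDegree)) (Fin ((f.comp (X ^ 2)).natDegree)) F,
        IsUnit P ∧
          companionMatrix (f.comp (X ^ 2)) * companionMatrix (f.comp (X ^ 2)) =
            P * D * P⁻¹ := by
  exact main_aux f hmonic h0 hirr.natDegree_pos (by simp [natDegree_comp]; ring) _ rfl
end

section
/- Let q be odd and f a monic irreducible polynomial over F_q of degree d with f(0) ≠ 0 such that f(x²) has a monic irreducible factor g of degree d. Then the companion matrix C_f of f has a square root in GL_d(F_q); namely C_g² is conjugate to C_f. -/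
open Polynomial Matrix AdjoinRoot

lemma pow_natDegree_eq {F : Type*} [Field F] (h : F[X]) (hm : h.Monic) :
    (root h) ^ h.natDegree
      = -∑ i ∈ Finset.range h.natDegree, h.coeff i • (root h) ^ i := by
  have h0 : (aeval (root h)) h = 0 := by
    rw [aeval_def]; exact eval₂_root h
  rw [aeval_eq_sum_range, Finset.sum_range_succ, hm.coeff_natDegree, one_smul] at h0
  linear_combination h0

lemma toMatrix_mulLeft_root {F : Type*} [Field F] (h : F[X]) (hm : h.Monic)
    (hd : 0 < h.natDegree) :
    LinearMap.toMatrix (powerBasis' hm).basis (powerBasis' hm).basis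
      (LinearMap.mulLeft F (root h)) = companionMatrix h := by
  set B := (powerBasis' hm).basis with hB
  ext i j
  have hi : (i : ℕ) < h.natDegree := i.isLt
  have hjlt : (j : ℕ) < h.natDegree := j.isLt
  rw [LinearMap.toMatrix_apply, LinearMap.mulLeft_apply]
  have hbe : ∀ k : Fin h.natDegree, B k = (root h) ^ (k : ℕ) := by
    intro k
    exact PowerBasis.basis_eq_pow (powerBasis' hm) k
  rw [hbe j, ← pow_succ']
  by_cases hj : (j : ℕ) = h.natDegree - 1
  · have hj1 : (j : ℕ) + 1 = h.natDegree := by omega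
    rw [hj1, pow_natDegree_eq h hm, map_neg, map_sum]
    simp only [Finsupp.coe_neg, Pi.neg_apply, Finset.sum_apply']
    have : ∀ k ∈ Finset.range h.natDegree,
        (B.repr (h.coeff k • root h ^ k)) i = h.coeff k * (if (i:ℕ) = k then 1 else 0) := by
      intro k hk
      rw [Finset.mem_range] at hk
      rw [← hbe (⟨k, hk⟩ : Fin (powerBasis' hm).dim), _root_.map_smul, Finsupp.smul_apply, B.repr_self, smul_eq_mul]
      congr 1
      rw [Finsupp.single_apply]
      simp [Fin.ext_iff, eq_comm]
    rw [Finset.sum_congr rfl this]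
    simp only [mul_ite, mul_one, mul_zero, Finset.sum_ite_eq, Finset.mem_range, hi,
      if_true]
    have h2 : ¬ ((i:ℕ) = (j:ℕ) + 1) := by omega
    simp only [companionMatrix]
    rw [if_neg h2, if_pos hj]
  · have hlt : (j : ℕ) + 1 < h.natDegree := by omega
    rw [← hbe (⟨(j:ℕ)+1, hlt⟩ : Fin (powerBasis' hm).dim), B.repr_self]
    rw [Finsupp.single_apply]
    simp [companionMatrix, hj, Fin.ext_iff, eq_comm]

/-- If `f` is monic irreducible of degree `d` over `F_q` (`q` odd) with `f(0) ≠ 0` and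
`f(x²)` has a monic irreducible factor `g` of degree `d`, then the companion matrix of `f`
has a square root in `GL_d(F_q)`: namely `C_g²` is conjugate to `C_f`. -/
theorem companion_sqrt_of_factor {F : Type*} [Field F] [Fintype F]
    (hq : Odd (Fintype.card F)) (f g : F[X]) (hmonic : f.Monic) (hirr : Irreducible f)
    (h0 : f.coeff 0 ≠ 0) (hgm : g.Monic) (hgirr : Irreducible g)
    (hgd : g.natDegree = f.natDegree) (hdvd : g ∣ f.comp (X ^ 2)) :
    (∃ S : Matrix (Fin f.natDegree) (Fin f.natDegree) F,
        IsUnit S ∧ S * S = companionMatrix f) ∧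
      ∃ P : Matrix (Fin f.natDegree) (Fin f.natDegree) F, IsUnit P ∧
        ((companionMatrix g).reindex (finCongr hgd) (finCongr hgd)) *
            ((companionMatrix g).reindex (finCongr hgd) (finCongr hgd)) =
          P * companionMatrix f * P⁻¹ := by
  haveI : Fact (Irreducible f) := ⟨hirr⟩
  haveI : Fact (Irreducible g) := ⟨hgirr⟩
  have hdf : 0 < f.natDegree := hirr.natDegree_pos
  have hdg : 0 < g.natDegree := hgirr.natDegree_pos
  set rg : AdjoinRoot g := root g with hrg
  -- f(rg^2) = 0
  have h2 : aeval (rg ^ 2) f = 0 := by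
    obtain ⟨c, hc⟩ := hdvd
    have : aeval rg (f.comp (X ^ 2)) = 0 := by
      rw [hc, _root_.map_mul]
      have : aeval rg g = 0 := by rw [aeval_def]; exact eval₂_root g
      rw [this, zero_mul]
    rwa [aeval_comp, map_pow, aeval_X] at this
  set L0 : AdjoinRoot f →ₐ[F] AdjoinRoot g := liftAlgHom f (Algebra.ofId F (AdjoinRoot g)) (rg ^ 2) h2 with hL0
  have hinj : Function.Injective L0.toLinearMap := by
    exact RingHom.injective (L0 : AdjoinRoot f →+* AdjoinRoot g)
  haveI : FiniteDimensional F (AdjoinRoot f) := (powerBasis' hmonic).finite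
  haveI : FiniteDimensional F (AdjoinRoot g) := (powerBasis' hgm).finite
  have hfr : Module.finrank F (AdjoinRoot f) = Module.finrank F (AdjoinRoot g) := by
    rw [(powerBasis' hmonic).finrank, (powerBasis' hgm).finrank]
    exact hgd.symm
  have hsurj : Function.Surjective L0.toLinearMap :=
    (LinearMap.injective_iff_surjective_of_finrank_eq_finrank hfr).mp hinj
  set L : AdjoinRoot f ≃ₗ[F] AdjoinRoot g :=
    LinearEquiv.ofBijective L0.toLinearMap ⟨hinj, hsurj⟩ with hL
  set Bf : Module.Basis (Fin f.natDegree) F (AdjoinRoot f) := (powerBasis' hmonic).basis with hBf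
  set Bg : Module.Basis (Fin f.natDegree) F (AdjoinRoot g) :=
    ((powerBasis' hgm).basis).reindex (finCongr hgd) with hBg
  set Cf := companionMatrix f
  set Cg' := (companionMatrix g).reindex (finCongr hgd) (finCongr hgd) with hCg'
  -- matrix of mul by rg in Bg is Cg'
  have hMg : LinearMap.toMatrix Bg Bg (LinearMap.mulLeft F rg) = Cg' := by
    have hkey := toMatrix_mulLeft_root g hgm hdg
    ext i j
    rw [hCg', reindex_apply, submatrix_apply, ← hkey, LinearMap.toMatrix_apply]
    erw [LinearMap.toMatrix_apply]
    rw [hBg, Module.Basis.reindex_apply, Module.Basis.repr_reindex_apply]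
    rfl
  have hMf : LinearMap.toMatrix Bf Bf (LinearMap.mulLeft F (root f)) = Cf :=
    toMatrix_mulLeft_root f hmonic hdf
  set P := LinearMap.toMatrix Bf Bg L.toLinearMap with hP
  set Q := LinearMap.toMatrix Bg Bf L.symm.toLinearMap with hQ
  have hPQ : P * Q = 1 := by
    rw [hP, hQ, ← LinearMap.toMatrix_comp, ← LinearMap.toMatrix_id Bg]
    congr 1
    ext v
    simp
  have hQP : Q * P = 1 := by
    rw [hQ, hP, ← LinearMap.toMatrix_comp, ← LinearMap.toMatrix_id Bf]
    congr 1
    ext v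
    simp
  have hPunit : IsUnit P := (Matrix.isUnit_iff_isUnit_det _).mpr (Matrix.isUnit_det_of_right_inverse hPQ)
  have hPinv : P⁻¹ = Q := inv_eq_right_inv hPQ
  -- intertwining relation
  have hLcoe : (L : AdjoinRoot f →ₗ[F] AdjoinRoot g) = L0.toLinearMap := rfl
  have hroot : L0 (root f) = rg ^ 2 := liftAlgHom_root _ _ _ h2
  have hcomm : (LinearMap.mulLeft F rg ∘ₗ LinearMap.mulLeft F rg) ∘ₗ
        (L : AdjoinRoot f →ₗ[F] AdjoinRoot g)
      = (L : AdjoinRoot f →ₗ[F] AdjoinRoot g) ∘ₗ LinearMap.mulLeft F (root f) := by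
    rw [hLcoe]
    ext v
    simp only [LinearMap.comp_apply, LinearMap.mulLeft_apply, AlgHom.toLinearMap_apply]
    rw [_root_.map_mul, hroot]
    ring
  have hmain : Cg' * Cg' * P = P * Cf := by
    rw [← hMg, ← hMf, hP, mul_assoc, ← LinearMap.toMatrix_comp Bf Bg Bg,
      ← LinearMap.toMatrix_comp Bf Bg Bg, ← LinearMap.toMatrix_comp Bf Bf Bg,
      ← LinearMap.comp_assoc, hcomm]
  -- C_f is a unit
  have hrootf : (root f : AdjoinRoot f) ≠ 0 := by
    intro hzero
    apply h0
    have ha : aeval (root f : AdjoinRoot f) f = 0 := by rw [aeval_def]; exact eval₂_root f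
    rw [hzero, aeval_def, eval₂_at_zero] at ha
    exact (algebraMap F (AdjoinRoot f)).injective (by rw [ha, map_zero])
  have hCfunit : IsUnit Cf := by
    have : Cf * LinearMap.toMatrix Bf Bf (LinearMap.mulLeft F (root f)⁻¹) = 1 := by
      rw [← hMf, ← LinearMap.toMatrix_comp Bf Bf Bf, ← LinearMap.mulLeft_mul,
        mul_inv_cancel₀ hrootf, LinearMap.mulLeft_one, LinearMap.toMatrix_id]
    exact (Matrix.isUnit_iff_isUnit_det _).mpr (Matrix.isUnit_det_of_right_inverse this)
  constructor
  · refine ⟨Q * Cg' * P, ?_, ?_⟩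
    · rw [Matrix.isUnit_iff_isUnit_det]
      have hdet : (Q * Cg' * P).det * (Q * Cg' * P).det = Cf.det := by
        have hS : (Q * Cg' * P) * (Q * Cg' * P) = Cf := by
          calc (Q * Cg' * P) * (Q * Cg' * P) = Q * Cg' * (P * Q) * Cg' * P := by
                noncomm_ring
          _ = Q * (Cg' * Cg' * P) := by rw [hPQ]; noncomm_ring
          _ = (Q * P) * Cf := by rw [hmain]; noncomm_ring
          _ = Cf := by rw [hQP, one_mul]
        rw [← Matrix.det_mul, hS]
      have : IsUnit ((Q * Cg' * P).det * (Q * Cg' * P).det) := by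
        rw [hdet]; exact (Matrix.isUnit_iff_isUnit_det _).mp hCfunit
      exact isUnit_of_mul_isUnit_left this
    · calc (Q * Cg' * P) * (Q * Cg' * P) = Q * Cg' * (P * Q) * Cg' * P := by
            noncomm_ring
      _ = Q * (Cg' * Cg' * P) := by rw [hPQ]; noncomm_ring
      _ = (Q * P) * Cf := by rw [hmain]; noncomm_ring
      _ = Cf := by rw [hQP, one_mul]
  · refine ⟨P, hPunit, ?_⟩
    rw [hPinv]
    calc Cg' * Cg' = Cg' * Cg' * (P * Q) := by rw [hPQ, mul_one]
    _ = (Cg' * Cg' * P) * Q := by noncomm_ring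
    _ = P * Cf * Q := by rw [hmain]
end
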